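/- arXiv:1401.5371 — 2 statements merged into one kernel-verified Lean document; each statement's English description precedes it below -/
import Mathlib

section
/- Suppose h : [k_min, k_max] × [0,1] → ℝ is continuous, h(k,ψ) < 0 for all ψ ∈ [0,1] when k = k_min (stability), h(k_max, ψ₀) > 0 for some ψ₀ (instability), h(k,ψ) < 0 whenever ψ ∉ (ψ₁, ψ₂) for fixed 0 ≤ ψ₁ < ψ₂ ≤ 1, and h is continuously differentiable with ∂h/∂k ≠ 0 on B := [k_min,k_max] × [ψ₁,ψ₂]. Then there exists k* with k_min < k* < k_max such that h(k,ψ) < 0 for all ψ whenever k < k*, and for every k > k* there exists ψ with h(k,ψ) > 0. -/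
/-!
For `ψ` in the band, `h(·, ψ)` has a nonvanishing derivative, so by Darboux's theorem it is
strictly monotone or strictly antitone; either way, as it starts negative at `k_min`, once it is
nonnegative it stays positive.
Hence the stable set `S = {k | h(k, ·) < 0 on [0,1]}` is an initial segment of `[k_min, k_max]`,
and `k* = sup S` is the transition. Compactness of `[0,1]` puts a neighbourhood of `k_min` in `S`,
and a zero of `h(·, ψ₀)` between `k_min` and `k_max` lies outside `S`, so `k_min < k* < k_max`.
-/

open Set Filter Topology

theorem strictMonoOn_or_strictAntiOn_of_hasDerivAt_ne_zero {D : Set ℝ} (hD : Convex ℝ D)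
    {f f' : ℝ → ℝ} (hf : ∀ x ∈ D, HasDerivAt f (f' x) x) (hf' : ∀ x ∈ D, f' x ≠ 0) :
    StrictMonoOn f D ∨ StrictAntiOn f D := by
  have hcont : ContinuousOn f D := fun x hx => (hf x hx).continuousAt.continuousWithinAt
  have hderiv : ∀ x ∈ interior D, HasDerivWithinAt f (f' x) (interior D) x :=
    fun x hx => (hf x (interior_subset hx)).hasDerivWithinAt
  rcases hasDerivWithinAt_forall_lt_or_forall_gt_of_forall_ne hD
    (fun x hx => (hf x hx).hasDerivWithinAt) hf' with hneg | hpos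
  · exact .inr <| strictAntiOn_of_hasDerivWithinAt_neg hD hcont hderiv
      fun x hx => hneg x (interior_subset hx)
  · exact .inl <| strictMonoOn_of_hasDerivWithinAt_pos hD hcont hderiv
      fun x hx => hpos x (interior_subset hx)

theorem pos_of_nonneg_of_lt_of_hasDerivAt_ne_zero {f f' : ℝ → ℝ} {a b x y : ℝ}
    (hf : ∀ t ∈ Icc a b, HasDerivAt f (f' t) t) (hf' : ∀ t ∈ Icc a b, f' t ≠ 0) (ha : f a < 0)
    (hx : x ∈ Icc a b) (hy : y ∈ Icc a b) (hxy : x < y) (hfx : 0 ≤ f x) : 0 < f y := by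
  rcases strictMonoOn_or_strictAntiOn_of_hasDerivAt_ne_zero (convex_Icc a b) hf hf' with
    hmono | hanti
  · exact hfx.trans_lt (hmono hx hy hxy)
  · have : f x ≤ f a := hanti.antitoneOn (left_mem_Icc.2 (hx.1.trans hx.2)) hx hx.1
    linarith

theorem ContinuousOn.eventually_forall_mem_of_isCompact {X Y Z : Type*} [TopologicalSpace X]
    [TopologicalSpace Y] [TopologicalSpace Z] {f : X → Y → Z} {s : Set X} {K : Set Y}
    {U : Set Z} {x₀ : X} (hf : ContinuousOn (fun p : X × Y => f p.1 p.2) (s ×ˢ K))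
    (hK : IsCompact K) (hU : IsOpen U) (hx₀ : x₀ ∈ s) (hfU : ∀ y ∈ K, f x₀ y ∈ U) :
    ∀ᶠ x in 𝓝[s] x₀, ∀ y ∈ K, f x y ∈ U := by
  have hloc : ∀ y ∈ K, ∀ᶠ z : X × Y in 𝓝 (x₀, y), z.1 ∈ s → z.2 ∈ K → f z.1 z.2 ∈ U := by
    intro y hy
    have := mem_nhdsWithin_iff_eventually.1 (hf (x₀, y) ⟨hx₀, hy⟩ (hU.mem_nhds (hfU y hy)))
    filter_upwards [this] with z hz hzs hzK using hz ⟨hzs, hzK⟩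
  rw [eventually_nhdsWithin_iff]
  filter_upwards [hK.eventually_forall_of_forall_eventually
    (P := fun x y => x ∈ s → y ∈ K → f x y ∈ U) hloc] with x hx hxs y hy
    using hx y hy hxs hy

theorem exists_mem_Ioo_forall_lt_zero {Y : Type*} [TopologicalSpace Y] {f : ℝ → Y → ℝ}
    {a b : ℝ} {K : Set Y} (hab : a < b)
    (hf : ContinuousOn (fun p : ℝ × Y => f p.1 p.2) (Icc a b ×ˢ K)) (hK : IsCompact K)
    (ha : ∀ y ∈ K, f a y < 0) : ∃ x ∈ Ioo a b, ∀ y ∈ K, f x y < 0 := by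
  have hev := (hf.eventually_forall_mem_of_isCompact hK isOpen_Iio (left_mem_Icc.2 hab.le)
    ha).filter_mono (nhdsWithin_mono _ Ioo_subset_Icc_self)
  rw [nhdsWithin_Ioo_eq_nhdsGT hab] at hev
  obtain ⟨x, hx, hxIoo⟩ := (hev.and (Ioo_mem_nhdsGT hab)).exists
  exact ⟨x, hxIoo, hx⟩

theorem exists_threshold_of_forall_lt_mem {S I : Set ℝ} {x₀ x₁ : ℝ}
    (hS : ∀ x ∈ S, ∀ y ∈ I, y < x → y ∈ S) (hx₁ : x₁ ∈ S) (hx₀ : x₀ ∈ I) (hx₀S : x₀ ∉ S) :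
    ∃ c ∈ Icc x₁ x₀, (∀ x ∈ I, x < c → x ∈ S) ∧ ∀ x ∈ S, x ≤ c := by
  have hbound : ∀ x ∈ S, x ≤ x₀ := fun x hx =>
    le_of_not_gt fun hlt => hx₀S (hS x hx x₀ hx₀ hlt)
  have hbdd : BddAbove S := ⟨x₀, hbound⟩
  refine ⟨sSup S, ⟨le_csSup hbdd hx₁, csSup_le ⟨x₁, hx₁⟩ hbound⟩, fun x hx hxc => ?_,
    fun x hx => le_csSup hbdd hx⟩
  obtain ⟨x', hx'S, hxx'⟩ := exists_lt_of_lt_csSup ⟨x₁, hx₁⟩ hxc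
  exact hS x' hx'S x hx hxx'

theorem pos_of_nonneg_of_lt_of_band {kmin kmax ψ₁ ψ₂ : ℝ} {h hk : ℝ → ℝ → ℝ}
    (hstab : ∀ ψ ∈ Icc (0:ℝ) 1, h kmin ψ < 0)
    (hneg : ∀ k ∈ Icc kmin kmax, ∀ ψ ∈ Icc (0:ℝ) 1, ψ ∉ Ioo ψ₁ ψ₂ → h k ψ < 0)
    (hderiv : ∀ k ∈ Icc kmin kmax, ∀ ψ ∈ Icc ψ₁ ψ₂, HasDerivAt (fun k' => h k' ψ) (hk k ψ) k)
    (hk_ne : ∀ k ∈ Icc kmin kmax, ∀ ψ ∈ Icc ψ₁ ψ₂, hk k ψ ≠ 0)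
    {k k' ψ : ℝ} (hkI : k ∈ Icc kmin kmax) (hk'I : k' ∈ Icc kmin kmax) (hkk' : k < k')
    (hψ : ψ ∈ Icc (0:ℝ) 1) (h0 : 0 ≤ h k ψ) : 0 < h k' ψ := by
  have hband : ψ ∈ Icc ψ₁ ψ₂ :=
    Ioo_subset_Icc_self (by_contra fun hout => (hneg k hkI ψ hψ hout).not_ge h0)
  exact pos_of_nonneg_of_lt_of_hasDerivAt_ne_zero (f := fun k => h k ψ)
    (fun t ht => hderiv t ht ψ hband) (fun t ht => hk_ne t ht ψ hband) (hstab ψ hψ)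
    hkI hk'I hkk' h0

theorem sharp_transition_part_i_general (kmin kmax ψ₁ ψ₂ : ℝ) (h hk : ℝ → ℝ → ℝ)
    (hk_lt : kmin < kmax)
    (hcont : ContinuousOn (fun p : ℝ × ℝ => h p.1 p.2) (Icc kmin kmax ×ˢ Icc 0 1))
    (hstab : ∀ ψ ∈ Icc (0:ℝ) 1, h kmin ψ < 0)
    (hunstab : ∃ ψ₀ ∈ Icc (0:ℝ) 1, 0 < h kmax ψ₀)
    (hneg : ∀ k ∈ Icc kmin kmax, ∀ ψ ∈ Icc (0:ℝ) 1, ψ ∉ Ioo ψ₁ ψ₂ → h k ψ < 0)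
    (hderiv : ∀ k ∈ Icc kmin kmax, ∀ ψ ∈ Icc ψ₁ ψ₂,
      HasDerivAt (fun k' => h k' ψ) (hk k ψ) k)
    (hk_ne : ∀ k ∈ Icc kmin kmax, ∀ ψ ∈ Icc ψ₁ ψ₂, hk k ψ ≠ 0) :
    ∃ kstar, kmin < kstar ∧ kstar < kmax ∧
      (∀ k ∈ Icc kmin kmax, k < kstar → ∀ ψ ∈ Icc (0:ℝ) 1, h k ψ < 0) ∧
      (∀ k ∈ Icc kmin kmax, kstar < k → ∃ ψ ∈ Icc (0:ℝ) 1, 0 < h k ψ) := by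
  set S := {k ∈ Icc kmin kmax | ∀ ψ ∈ Icc (0:ℝ) 1, h k ψ < 0}
  have hS : ∀ k ∈ S, ∀ k' ∈ Icc kmin kmax, k' < k → k' ∈ S := fun k hkS k' hk'I hk'k =>
    ⟨hk'I, fun ψ hψ => not_le.1 fun h0 => (hkS.2 ψ hψ).not_gt
      (pos_of_nonneg_of_lt_of_band hstab hneg hderiv hk_ne hk'I hkS.1 hk'k hψ h0)⟩
  obtain ⟨k₁, hk₁, hk₁S⟩ := exists_mem_Ioo_forall_lt_zero hk_lt hcont isCompact_Icc hstab
  obtain ⟨ψ₀, hψ₀, hψ₀pos⟩ := hunstab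
  obtain ⟨k₀, hk₀, hk₀zero⟩ : ∃ k₀ ∈ Ioo kmin kmax, h k₀ ψ₀ = 0 :=
    intermediate_value_Ioo hk_lt.le
      (hcont.comp (continuous_id.prodMk continuous_const).continuousOn fun k hkI => ⟨hkI, hψ₀⟩)
      ⟨hstab ψ₀ hψ₀, hψ₀pos⟩
  obtain ⟨c, ⟨hc₁, hc₀⟩, hbelow, hbound⟩ := exists_threshold_of_forall_lt_mem hS
    (show k₁ ∈ S from ⟨Ioo_subset_Icc_self hk₁, hk₁S⟩)
    (Ioo_subset_Icc_self hk₀) fun hk₀S => (hk₀S.2 ψ₀ hψ₀).ne hk₀zero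
  refine ⟨c, hk₁.1.trans_le hc₁, hc₀.trans_lt hk₀.2, fun k hkI hkc => (hbelow k hkI hkc).2,
    fun k hkI hck => ?_⟩
  have hm : (c + k) / 2 ∈ Icc kmin kmax := ⟨by linarith [hk₁.1], by linarith [hkI.2]⟩
  have hmS : (c + k) / 2 ∉ S := fun hmS => by linarith [hbound _ hmS]
  obtain ⟨ψ, hψ, h0⟩ : ∃ ψ ∈ Icc (0:ℝ) 1, 0 ≤ h ((c + k) / 2) ψ := by
    by_contra! hall
    exact hmS ⟨hm, hall⟩
  exact ⟨ψ, hψ,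
    pos_of_nonneg_of_lt_of_band hstab hneg hderiv hk_ne hm hkI (by linarith) hψ h0⟩

/-- Sharp stability transition, part (i). Suppose `h` is continuous on
`[k_min,k_max] × [0,1]`, `h(k_min,·) < 0` (stability), `h(k_max,ψ₀) > 0` for some `ψ₀`
(instability), `h(k,ψ) < 0` whenever `ψ ∉ (ψ₁,ψ₂)`, and `h` has a continuous, nonvanishing
partial derivative in `k` on `B = [k_min,k_max] × [ψ₁,ψ₂]`. Then there is a sharp
stability boundary `k*` with `k_min < k* < k_max`: stability holds for `k < k*` and
fails for `k > k*`. -/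
theorem sharp_transition_part_i (kmin kmax ψ₁ ψ₂ : ℝ) (h hk : ℝ → ℝ → ℝ)
    (hk_lt : kmin < kmax) (hψ₁ : 0 ≤ ψ₁) (hψ₁₂ : ψ₁ < ψ₂) (hψ₂ : ψ₂ ≤ 1)
    (hcont : ContinuousOn (fun p : ℝ × ℝ => h p.1 p.2) (Icc kmin kmax ×ˢ Icc 0 1))
    (hstab : ∀ ψ ∈ Icc (0:ℝ) 1, h kmin ψ < 0)
    (hunstab : ∃ ψ₀ ∈ Icc (0:ℝ) 1, 0 < h kmax ψ₀)
    (hneg : ∀ k ∈ Icc kmin kmax, ∀ ψ ∈ Icc (0:ℝ) 1, ψ ∉ Ioo ψ₁ ψ₂ → h k ψ < 0)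
    (hderiv : ∀ k ∈ Icc kmin kmax, ∀ ψ ∈ Icc ψ₁ ψ₂,
      HasDerivAt (fun k' => h k' ψ) (hk k ψ) k)
    (hk_cont : ContinuousOn (fun p : ℝ × ℝ => hk p.1 p.2) (Icc kmin kmax ×ˢ Icc ψ₁ ψ₂))
    (hk_ne : ∀ k ∈ Icc kmin kmax, ∀ ψ ∈ Icc ψ₁ ψ₂, hk k ψ ≠ 0) :
    ∃ kstar, kmin < kstar ∧ kstar < kmax ∧
      (∀ k ∈ Icc kmin kmax, k < kstar → ∀ ψ ∈ Icc (0:ℝ) 1, h k ψ < 0) ∧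
      (∀ k ∈ Icc kmin kmax, kstar < k → ∃ ψ ∈ Icc (0:ℝ) 1, 0 < h k ψ) :=
  sharp_transition_part_i_general kmin kmax ψ₁ ψ₂ h hk hk_lt hcont hstab hunstab hneg hderiv hk_ne
end

section
/- Under the hypotheses of the sharp transition lemma, assume additionally that h is C² on B = [k_min,k_max] × [ψ₁,ψ₂] with ∂h/∂k > 0 and ∂²h/∂ψ² < 0 on B (strict concavity in ψ). Then the transition point is unique: there is exactly one pair (k*, ψ*) ∈ (k_min,k_max) × [ψ₁,ψ₂] with h(k*,ψ*) = 0 and ∂h/∂ψ(k*,ψ*) = 0, i.e. at k = k* the function ψ ↦ h(k*,ψ) attains its maximum value 0 at the single point ψ*. -/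
/-!
The transition point is found as the first `k` at which the superlevel set `{h ≥ 0}` of the
box `[k_min, k_max] × [ψ₁, ψ₂]` is reached: by compactness that set has a point `(k*, ψ*)` of
least `k`, and the intermediate value theorem in `k` shows `h(k*, ·) ≤ 0`, so `h(k*, ψ*) = 0`
is an interior maximum and `∂h/∂ψ(k*, ψ*) = 0`. Strict concavity in `ψ` makes this maximum
strict. For uniqueness, strict monotonicity in `k` forbids two distinct levels `k` at which
`h(k, ·)` has maximum `0`, and strict concavity forbids two maximisers at the same level.
-/

open Set

theorem StrictConcaveOn.lt_of_isMaxOn_of_ne {𝕜 E β : Type*} [Field 𝕜] [LinearOrder 𝕜]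
    [IsStrictOrderedRing 𝕜] [AddCommMonoid β] [PartialOrder β] [IsOrderedAddMonoid β]
    [AddCommMonoid E] [SMul 𝕜 E] [Module 𝕜 β] [PosSMulMono 𝕜 β] {f : E → β} {s : Set E}
    {x y : E} (hf : StrictConcaveOn 𝕜 s f) (hmax : IsMaxOn f s x) (hx : x ∈ s) (hy : y ∈ s)
    (hne : y ≠ x) : f y < f x :=
  (hmax hy).lt_of_ne fun hxy => hne <| hf.eq_of_isMaxOn (fun _ hz => hxy ▸ hmax hz) hmax hy hx

theorem strictMonoOn_of_hasDerivAt_pos {D : Set ℝ} (hD : Convex ℝ D) {f f' : ℝ → ℝ}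
    (hf : ∀ x ∈ D, HasDerivAt f (f' x) x) (hf' : ∀ x ∈ D, 0 < f' x) : StrictMonoOn f D :=
  strictMonoOn_of_hasDerivWithinAt_pos hD
    (fun x hx => (hf x hx).continuousAt.continuousWithinAt)
    (fun x hx => (hf x (interior_subset hx)).hasDerivWithinAt)
    (fun x hx => hf' x (interior_subset hx))

theorem strictConcaveOn_of_hasDerivAt2_neg {D : Set ℝ} (hD : Convex ℝ D) {f f' f'' : ℝ → ℝ}
    (hf : ∀ x ∈ D, HasDerivAt f (f' x) x) (hf' : ∀ x ∈ D, HasDerivAt f' (f'' x) x)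
    (hf'' : ∀ x ∈ D, f'' x < 0) : StrictConcaveOn ℝ D f := by
  have hanti : StrictAntiOn f' D :=
    strictAntiOn_of_hasDerivWithinAt_neg hD
      (fun x hx => (hf' x hx).continuousAt.continuousWithinAt)
      (fun x hx => (hf' x (interior_subset hx)).hasDerivWithinAt)
      (fun x hx => hf'' x (interior_subset hx))
  refine StrictAntiOn.strictConcaveOn_of_deriv hD
    (fun x hx => (hf x hx).continuousAt.continuousWithinAt) ?_
  exact (hanti.mono interior_subset).congr fun x hx => (hf x (interior_subset hx)).deriv.symm

theorem exists_mem_Ioo_isMaxOn_eq_zero {h : ℝ → ℝ → ℝ} {a b : ℝ} {S : Set ℝ}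
    (hS : IsCompact S) (hab : a ≤ b)
    (hcont : ContinuousOn (fun p : ℝ × ℝ => h p.1 p.2) (Icc a b ×ˢ S))
    (ha : ∀ ψ ∈ S, h a ψ < 0) (hb : ∃ ψ ∈ S, 0 < h b ψ) :
    ∃ k ∈ Ioo a b, ∃ ψ ∈ S, h k ψ = 0 ∧ IsMaxOn (h k) S ψ := by
  obtain ⟨ψ₀, hψ₀, hbψ₀⟩ := hb
  have hbox : IsCompact (Icc a b ×ˢ S) := isCompact_Icc.prod hS
  have hsuper : IsCompact (Icc a b ×ˢ S ∩ (fun p : ℝ × ℝ => h p.1 p.2) ⁻¹' Ici 0) :=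
    hbox.of_isClosed_subset
      (hcont.preimage_isClosed_of_isClosed hbox.isClosed isClosed_Ici) inter_subset_left
  obtain ⟨⟨k, ψ⟩, ⟨⟨hk, hψ⟩, hkψ⟩, hmin⟩ :=
    hsuper.exists_isMinOn ⟨(b, ψ₀), ⟨⟨hab, le_rfl⟩, hψ₀⟩, hbψ₀.le⟩ continuous_fst.continuousOn
  have hle : ∀ ψ' ∈ S, h k ψ' ≤ 0 := by
    intro ψ' hψ'
    by_contra! hpos
    have hcont' : ContinuousOn (h · ψ') (Icc a k) :=
      hcont.comp (continuous_id.prodMk continuous_const).continuousOn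
        fun x hx => ⟨⟨hx.1, hx.2.trans hk.2⟩, hψ'⟩
    obtain ⟨k', hk', hk'0⟩ := intermediate_value_Ioo hk.1 hcont' ⟨ha ψ' hψ', hpos⟩
    exact (hmin (a := (k', ψ')) ⟨⟨⟨hk'.1.le, hk'.2.le.trans hk.2⟩, hψ'⟩, hk'0.ge⟩).not_gt hk'.2
  have h0 : h k ψ = 0 := (hle ψ hψ).antisymm hkψ
  refine ⟨k, ⟨?_, ?_⟩, ψ, hψ, h0, fun ψ' hψ' => (hle ψ' hψ').trans h0.ge⟩
  · exact hk.1.lt_of_ne (by rintro rfl; exact (ha ψ hψ).ne h0)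
  · exact hk.2.lt_of_ne (by rintro rfl; exact (hle ψ₀ hψ₀).not_gt hbψ₀)

theorem eq_of_isMaxOn_eq_zero_of_strictMonoOn {h : ℝ → ℝ → ℝ} {I S : Set ℝ}
    (hmono : ∀ ψ ∈ S, StrictMonoOn (h · ψ) I) {k k' ψ ψ' : ℝ} (hk : k ∈ I) (hk' : k' ∈ I)
    (hψ : ψ ∈ S) (hψ' : ψ' ∈ S) (h0 : h k ψ = 0) (hmax : IsMaxOn (h k) S ψ)
    (h0' : h k' ψ' = 0) (hmax' : IsMaxOn (h k') S ψ') : k = k' :=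
  le_antisymm ((hmono ψ' hψ').le_iff_le hk hk' |>.1 (h0' ▸ h0 ▸ hmax hψ'))
    ((hmono ψ hψ).le_iff_le hk' hk |>.1 (h0 ▸ h0' ▸ hmax' hψ))

theorem sharp_transition_part_ii_general (kmin kmax ψ₁ ψ₂ : ℝ) (h hk hψ hψψ : ℝ → ℝ → ℝ)
    (hk_lt : kmin < kmax) (hψ₁ : 0 ≤ ψ₁) (hψ₂ : ψ₂ ≤ 1)
    (hcont : ContinuousOn (fun p : ℝ × ℝ => h p.1 p.2) (Icc kmin kmax ×ˢ Icc 0 1))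
    (hstab : ∀ ψ ∈ Icc (0:ℝ) 1, h kmin ψ < 0)
    (hunstab : ∃ ψ₀ ∈ Icc (0:ℝ) 1, 0 < h kmax ψ₀)
    (hneg : ∀ k ∈ Icc kmin kmax, ∀ ψ ∈ Icc (0:ℝ) 1, ψ ∉ Ioo ψ₁ ψ₂ → h k ψ < 0)
    (hderivk : ∀ k ∈ Icc kmin kmax, ∀ ψ ∈ Icc ψ₁ ψ₂,
      HasDerivAt (fun k' => h k' ψ) (hk k ψ) k)
    (hderivψ : ∀ k ∈ Icc kmin kmax, ∀ ψ ∈ Icc ψ₁ ψ₂,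
      HasDerivAt (fun ψ' => h k ψ') (hψ k ψ) ψ)
    (hderivψψ : ∀ k ∈ Icc kmin kmax, ∀ ψ ∈ Icc ψ₁ ψ₂,
      HasDerivAt (fun ψ' => hψ k ψ') (hψψ k ψ) ψ)
    (hk_pos : ∀ k ∈ Icc kmin kmax, ∀ ψ ∈ Icc ψ₁ ψ₂, 0 < hk k ψ)
    (hψψ_neg : ∀ k ∈ Icc kmin kmax, ∀ ψ ∈ Icc ψ₁ ψ₂, hψψ k ψ < 0) :
    ∃! p : ℝ × ℝ, p.1 ∈ Ioo kmin kmax ∧ p.2 ∈ Icc ψ₁ ψ₂ ∧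
      h p.1 p.2 = 0 ∧ hψ p.1 p.2 = 0 ∧
      (∀ ψ ∈ Icc (0:ℝ) 1, ψ ≠ p.2 → h p.1 ψ < 0) := by
  have hS : Icc ψ₁ ψ₂ ⊆ Icc 0 1 := Icc_subset_Icc hψ₁ hψ₂
  have mem_Ioo_of_nonneg : ∀ k ∈ Icc kmin kmax, ∀ ψ ∈ Icc (0:ℝ) 1, 0 ≤ h k ψ → ψ ∈ Ioo ψ₁ ψ₂ :=
    fun k hk ψ hψ hnonneg => by_contra fun hout => (hneg k hk ψ hψ hout).not_ge hnonneg
  obtain ⟨ψ₀, hψ₀, hpos⟩ := hunstab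
  obtain ⟨k, hk, ψ, hψ, h0, hmax⟩ := exists_mem_Ioo_isMaxOn_eq_zero isCompact_Icc hk_lt.le
    (hcont.mono (prod_mono_right hS)) (fun ψ hψ => hstab ψ (hS hψ))
    ⟨ψ₀, Ioo_subset_Icc_self (mem_Ioo_of_nonneg kmax ⟨hk_lt.le, le_rfl⟩ ψ₀ hψ₀ hpos.le), hpos⟩
  have hkI : k ∈ Icc kmin kmax := Ioo_subset_Icc_self hk
  have hψI : ψ ∈ Ioo ψ₁ ψ₂ := mem_Ioo_of_nonneg k hkI ψ (hS hψ) h0.ge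
  have hstrict : ∀ ψ' ∈ Icc (0:ℝ) 1, ψ' ≠ ψ → h k ψ' < 0 := by
    intro ψ' hψ' hne
    by_cases hψ'I : ψ' ∈ Ioo ψ₁ ψ₂
    · exact h0 ▸ (strictConcaveOn_of_hasDerivAt2_neg (convex_Icc ψ₁ ψ₂) (hderivψ k hkI)
        (hderivψψ k hkI) (hψψ_neg k hkI)).lt_of_isMaxOn_of_ne hmax hψ
        (Ioo_subset_Icc_self hψ'I) hne
    · exact hneg k hkI ψ' hψ' hψ'I
  refine ⟨(k, ψ), ⟨hk, hψ, h0, ?_, hstrict⟩, ?_⟩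
  · exact (hmax.isLocalMax (Icc_mem_nhds hψI.1 hψI.2)).hasDerivAt_eq_zero (hderivψ k hkI ψ hψ)
  rintro ⟨k', ψ'⟩ ⟨hk', hψ', h0', -, hstrict'⟩
  have hmax' : IsMaxOn (h k') (Icc ψ₁ ψ₂) ψ' := fun x hx => show h k' x ≤ h k' ψ' by
    rcases eq_or_ne x ψ' with rfl | hne
    exacts [le_rfl, h0' ▸ (hstrict' x (hS hx) hne).le]
  have hkk' : k = k' := eq_of_isMaxOn_eq_zero_of_strictMonoOn
    (fun x hx => strictMonoOn_of_hasDerivAt_pos (convex_Icc kmin kmax)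
      (fun k hk => hderivk k hk x hx) (fun k hk => hk_pos k hk x hx))
    hkI (Ioo_subset_Icc_self hk') hψ hψ' h0 hmax h0' hmax'
  subst hkk'
  exact Prod.ext rfl (by_contra fun hne => (hstrict ψ' (hS hψ') hne).ne h0')

/-- Sharp stability transition, part (ii): uniqueness of the transition point. Under the
hypotheses of part (i), if moreover `∂h/∂k > 0` and `∂²h/∂ψ² < 0` (strict concavity in
`ψ`) on `B = [k_min,k_max] × [ψ₁,ψ₂]`, then there is exactly one pair
`(k*,ψ*) ∈ (k_min,k_max) × [ψ₁,ψ₂]` with `h(k*,ψ*) = 0` and `∂h/∂ψ(k*,ψ*) = 0`;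
at `k = k*` the function `ψ ↦ h(k*,ψ)` attains its maximum value `0` at `ψ*` alone. -/
theorem sharp_transition_part_ii (kmin kmax ψ₁ ψ₂ : ℝ) (h hk hψ hψψ : ℝ → ℝ → ℝ)
    (hk_lt : kmin < kmax) (hψ₁ : 0 ≤ ψ₁) (hψ₁₂ : ψ₁ < ψ₂) (hψ₂ : ψ₂ ≤ 1)
    (hcont : ContinuousOn (fun p : ℝ × ℝ => h p.1 p.2) (Icc kmin kmax ×ˢ Icc 0 1))
    (hstab : ∀ ψ ∈ Icc (0:ℝ) 1, h kmin ψ < 0)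
    (hunstab : ∃ ψ₀ ∈ Icc (0:ℝ) 1, 0 < h kmax ψ₀)
    (hneg : ∀ k ∈ Icc kmin kmax, ∀ ψ ∈ Icc (0:ℝ) 1, ψ ∉ Ioo ψ₁ ψ₂ → h k ψ < 0)
    (hderivk : ∀ k ∈ Icc kmin kmax, ∀ ψ ∈ Icc ψ₁ ψ₂,
      HasDerivAt (fun k' => h k' ψ) (hk k ψ) k)
    (hderivψ : ∀ k ∈ Icc kmin kmax, ∀ ψ ∈ Icc ψ₁ ψ₂,
      HasDerivAt (fun ψ' => h k ψ') (hψ k ψ) ψ)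
    (hderivψψ : ∀ k ∈ Icc kmin kmax, ∀ ψ ∈ Icc ψ₁ ψ₂,
      HasDerivAt (fun ψ' => hψ k ψ') (hψψ k ψ) ψ)
    (hC2 : ContinuousOn (fun p : ℝ × ℝ => hψψ p.1 p.2) (Icc kmin kmax ×ˢ Icc ψ₁ ψ₂))
    (hk_pos : ∀ k ∈ Icc kmin kmax, ∀ ψ ∈ Icc ψ₁ ψ₂, 0 < hk k ψ)
    (hψψ_neg : ∀ k ∈ Icc kmin kmax, ∀ ψ ∈ Icc ψ₁ ψ₂, hψψ k ψ < 0) :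
    ∃! p : ℝ × ℝ, p.1 ∈ Ioo kmin kmax ∧ p.2 ∈ Icc ψ₁ ψ₂ ∧
      h p.1 p.2 = 0 ∧ hψ p.1 p.2 = 0 ∧
      (∀ ψ ∈ Icc (0:ℝ) 1, ψ ≠ p.2 → h p.1 ψ < 0) :=
  sharp_transition_part_ii_general kmin kmax ψ₁ ψ₂ h hk hψ hψψ hk_lt hψ₁ hψ₂ hcont hstab hunstab
    hneg hderivk hderivψ hderivψψ hk_pos hψψ_neg
end
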